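/- Let p be a prime and q = p^a for some positive integer a, and define W'(q) as the set of all sums y_0 + y_1 + ⋯ + y_{⌊q/2⌋} over tuples (y_0, …, y_{⌊q/2⌋}) of natural numbers satisfying Σ_{i=0}^{⌊q/2⌋} y_i·(ζ_q^i + ζ_q^{q−i}) = −1, where ζ_q = e^{2πi/q}. Then W'(q) = ∅ if p = 2, and W'(q) = { (−1 + (1 + 2x)·p)/2 : x ∈ ℕ } if p is odd. -/

import Mathlib

open Finset Polynomial

/-- The `t`-th power graph: vertices are adjacent when they are distinct and at
graph (geodesic) distance at most `t` in `G`. -/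
def powerGraph {V : Type*} (G : SimpleGraph V) (t : ℕ) : SimpleGraph V where
  Adj u v := u ≠ v ∧ G.Reachable u v ∧ G.dist u v ≤ t
  symm := by
    constructor
    rintro u v ⟨h1, h2, h3⟩
    exact ⟨h1.symm, h2.symm, by rwa [SimpleGraph.dist_comm]⟩
  loopless := ⟨fun v h => h.1 rfl⟩

/-- The distance-`t` chromatic number of a graph. -/
noncomputable def distChromaticNumber {V : Type*} (G : SimpleGraph V) (t : ℕ) : ℕ∞ :=
  (powerGraph G t).chromaticNumber

/-- `x` is an eigenvalue of the (real) adjacency matrix of `G`. -/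
def IsAdjEigenvalue {V : Type*} [Fintype V] [DecidableEq V] (G : SimpleGraph V)
    [DecidableRel G.Adj] (x : ℝ) : Prop :=
  ∃ v : V → ℝ, v ≠ 0 ∧ (SimpleGraph.adjMatrix ℝ G).mulVec v = x • v

/-- The hypercube graph `Q_n`. -/
def hypercube (n : ℕ) : SimpleGraph (Fin n → Fin 2) where
  Adj u v := hammingDist u v = 1
  symm := ⟨fun u v h => by (try simp only at h ⊢); rwa [hammingDist_comm]⟩
  loopless := ⟨fun u h => by simp only [hammingDist_self] at h; exact absurd h (by norm_num)⟩

noncomputable instance (n : ℕ) : DecidableRel (hypercube n).Adj :=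
  fun _ _ => Classical.dec _

/-- The Lee graph `G(n,q)`: the `n`-fold Cartesian product of the `q`-cycle. -/
def leeGraph (n q : ℕ) : SimpleGraph (Fin n → ZMod q) where
  Adj u v := u ≠ v ∧ ∃ i, (u i = v i + 1 ∨ v i = u i + 1) ∧ ∀ j, j ≠ i → u j = v j
  symm := by
    constructor
    rintro u v ⟨hne, i, h, hj⟩
    exact ⟨hne.symm, i, h.symm, fun j hji => (hj j hji).symm⟩
  loopless := ⟨fun u h => h.1 rfl⟩

noncomputable instance (n q : ℕ) : DecidableRel (leeGraph n q).Adj :=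
  fun _ _ => Classical.dec _

/-- The Lee distance on `(ℤ/qℤ)^n`. -/
def leeDist {n q : ℕ} (b c : Fin n → ZMod q) : ℕ :=
  ∑ i, min ((b i - c i).val) (q - (b i - c i).val)

/-- The primitive `q`-th root of unity `ζ_q = e^{2πi/q}`. -/
noncomputable def zetaC (q : ℕ) : ℂ := Complex.exp (2 * Real.pi * Complex.I / q)

/-- `W'(q)`: the set of sums `y₀ + ⋯ + y_{⌊q/2⌋}` over tuples of naturals with
`∑ y_i (ζ_q^i + ζ_q^{q−i}) = −1`. -/
def WPrime (q : ℕ) : Set ℕ :=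
  {m | ∃ y : Fin (q / 2 + 1) → ℕ,
    (∑ i, (y i : ℂ) * (zetaC q ^ (i : ℕ) + zetaC q ^ (q - (i : ℕ)))) = -1 ∧
    (∑ i, y i) = m}

/-! If `∑ yᵢ (ζ^i + ζ^{-i}) = -1`, then `ζ = ζ_q` is a root of the integer polynomial
`f = ∑ yᵢ (X^i + X^{q-i}) + 1`, so the cyclotomic polynomial `Φ_q` divides `f`; evaluating at `1`
gives `p = Φ_q(1) ∣ f(1) = 2 ∑ yᵢ + 1`. Conversely, for odd `p = 2k + 1` and `q = p r`, the tuple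
`y₀ = x`, `y_{jr} = 1 + 2x` (`1 ≤ j ≤ k`) is a solution with `∑ yᵢ = x + k (1 + 2x)`: for `ω = ζ_q^r` we have
`∑_{j=1}^{k} (ω^j + ω^{-j}) = ∑_{j=1}^{p-1} ω^j = -1`. -/

theorem Finset.sum_range_eq_sum_range_mul_of_support_dvd {M : Type*} [AddCommMonoid M]
    {n r k : ℕ} (hr : 0 < r) (hkn : k * r < n) (hnk : n ≤ (k + 1) * r) (F : ℕ → M)
    (hF : ∀ i, ¬ r ∣ i → F i = 0) :
    ∑ i ∈ range n, F i = ∑ j ∈ range (k + 1), F (j * r) := by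
  have hsub : (range (k + 1)).image (· * r) ⊆ range n := by
    rintro _ hi
    obtain ⟨j, hj, rfl⟩ := mem_image.mp hi
    have : j * r ≤ k * r := Nat.mul_le_mul_right r (by grind)
    exact mem_range.mpr (by omega)
  rw [← sum_subset hsub, sum_image fun a _ b _ h => Nat.eq_of_mul_eq_mul_right hr h]
  rintro i hi hi'
  refine hF i fun ⟨j, hj⟩ => hi' (mem_image.mpr ⟨j, mem_range.mpr ?_, by grind⟩)
  by_contra! hkj
  have : (k + 1) * r ≤ j * r := Nat.mul_le_mul_right r hkj
  grind

theorem IsPrimitiveRoot.sum_range_pow_add_pow_sub {R : Type*} [CommRing R] [IsDomain R]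
    {ω : R} {k : ℕ} (hω : IsPrimitiveRoot ω (2 * k + 1)) (hk : 0 < k) :
    ∑ j ∈ range k, (ω ^ (j + 1) + ω ^ (2 * k + 1 - (j + 1))) = -1 := by
  have hgeom : 1 + ∑ j ∈ range (k + k), ω ^ (j + 1) = 0 := by
    rw [← hω.geom_sum_eq_zero (by omega), show 2 * k + 1 = k + k + 1 by ring,
      sum_range_succ', pow_zero, add_comm]
  have hreflect : ∑ j ∈ range k, ω ^ (2 * k + 1 - (j + 1)) = ∑ j ∈ range k, ω ^ (k + j + 1) := by
    rw [← sum_range_reflect (fun j => ω ^ (k + j + 1)) k]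
    exact sum_congr rfl fun j hj => by rw [mem_range] at hj; congr 1; omega
  rw [sum_add_distrib, hreflect, ← eq_neg_of_add_eq_zero_right hgeom, sum_range_add]

theorem eval_one_cyclotomic_dvd_of_mem_WPrime {q m : ℕ} (hq : 0 < q) (hm : m ∈ WPrime q) :
    (cyclotomic q ℤ).eval 1 ∣ 2 * m + 1 := by
  obtain ⟨y, hy, rfl⟩ := hm
  have hζ : IsPrimitiveRoot (zetaC q) q := Complex.isPrimitiveRoot_exp q hq.ne'
  let f : ℤ[X] := ∑ i, C (y i : ℤ) * (X ^ (i : ℕ) + X ^ (q - i)) + 1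
  have hf : aeval (zetaC q) f = 0 := by
    simp only [f, map_add, map_sum, map_mul, map_pow, aeval_X, map_one, map_natCast, hy,
      neg_add_cancel]
  have hdvd : cyclotomic q ℤ ∣ f := by
    rw [cyclotomic_eq_minpoly hζ hq]
    exact minpoly.isIntegrallyClosed_dvd (hζ.isIntegral hq) hf
  have hf1 : f.eval 1 = 2 * ((∑ i, y i : ℕ) : ℤ) + 1 := by
    simp [f, eval_finsetSum, mul_sum, mul_comm]
  exact hf1 ▸ eval_dvd hdvd

theorem mem_WPrime_two_mul_add_one_mul {k r : ℕ} (hk : 0 < k) (hr : 0 < r) (x : ℕ) :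
    x + k * (1 + 2 * x) ∈ WPrime ((2 * k + 1) * r) := by
  set q := (2 * k + 1) * r
  have hkq : k * r < q / 2 + 1 := by grind
  have hqk : q / 2 + 1 ≤ (k + 1) * r := by grind
  let y : ℕ → ℕ := fun i => if i = 0 then x else if r ∣ i then 1 + 2 * x else 0
  have hy_supp : ∀ i, ¬ r ∣ i → y i = 0 := fun i hi => by
    simp [y, hi, show i ≠ 0 by rintro rfl; exact hi (dvd_zero r)]
  have hy : ∀ j ∈ range k, y ((j + 1) * r) = 1 + 2 * x := fun j _ => by
    simp [y, hr.ne', Dvd.intro_left]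
  have hζ : IsPrimitiveRoot (zetaC q) q := Complex.isPrimitiveRoot_exp q (by positivity)
  have hω : IsPrimitiveRoot (zetaC q ^ r) (2 * k + 1) := hζ.pow (by positivity) (mul_comm _ _)
  have hpow : ∀ j, zetaC q ^ (j * r) + zetaC q ^ (q - j * r)
      = (zetaC q ^ r) ^ j + (zetaC q ^ r) ^ (2 * k + 1 - j) := fun j => by
    rw [← Nat.sub_mul, ← pow_mul, ← pow_mul, mul_comm r, mul_comm r]
  refine ⟨fun i => y i, ?_, ?_⟩
  · rw [Fin.sum_univ_eq_sum_range (fun i => (y i : ℂ) * (zetaC q ^ i + zetaC q ^ (q - i))),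
      sum_range_eq_sum_range_mul_of_support_dvd hr hkq hqk _ (fun i hi => by simp [hy_supp i hi]),
      sum_range_succ']
    simp only [hpow]
    rw [sum_congr rfl fun j hj => by rw [hy j hj], ← mul_sum, hω.sum_range_pow_add_pow_sub hk]
    simp [y, hω.pow_eq_one]
    ring
  · rw [Fin.sum_univ_eq_sum_range y,
      sum_range_eq_sum_range_mul_of_support_dvd hr hkq hqk _ hy_supp, sum_range_succ',
      sum_congr rfl hy]
    simp [y, add_comm]

theorem dvd_two_mul_add_one_of_mem_WPrime_prime_pow {p a m : ℕ} (hp : p.Prime) (ha : 1 ≤ a)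
    (hm : m ∈ WPrime (p ^ a)) : p ∣ 2 * m + 1 := by
  have : Fact p.Prime := ⟨hp⟩
  obtain ⟨b, rfl⟩ : ∃ b, a = b + 1 := ⟨a - 1, by omega⟩
  have h := eval_one_cyclotomic_dvd_of_mem_WPrime (pow_pos hp.pos _) hm
  rw [eval_one_cyclotomic_prime_pow] at h
  exact_mod_cast h

/-- for a prime power `q = p^a`, `W'(q) = ∅` if `p = 2` and
`W'(q) = {(−1 + (1+2x)p)/2 : x ∈ ℕ}` (i.e. `{m : 2m + 1 = (1+2x)p}`) if `p` is odd. -/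
theorem stmt14 (p a : ℕ) (hp : p.Prime) (ha : 1 ≤ a) :
    (p = 2 → WPrime (p ^ a) = ∅) ∧
    (Odd p → WPrime (p ^ a) = {m : ℕ | ∃ x : ℕ, 2 * m + 1 = (1 + 2 * x) * p}) := by
  have hdvd m (hm : m ∈ WPrime (p ^ a)) := dvd_two_mul_add_one_of_mem_WPrime_prime_pow hp ha hm
  refine ⟨fun hp2 => Set.eq_empty_of_forall_notMem fun m hm => ?_, fun ⟨k, hk⟩ => ?_⟩
  · have := hdvd m hm
    rw [hp2] at this
    omega
  ext m
  refine ⟨fun hm => ?_, fun ⟨x, hx⟩ => ?_⟩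
  · obtain ⟨d, hd⟩ := hdvd m hm
    obtain ⟨x, rfl⟩ : Odd d := (Nat.odd_mul.mp (hd ▸ odd_two_mul_add_one m)).2
    exact ⟨x, by rw [hd]; ring⟩
  · have hq : p ^ a = (2 * k + 1) * p ^ (a - 1) := by
      rw [← hk, ← pow_succ', Nat.sub_add_cancel ha]
    have hm : m = x + k * (1 + 2 * x) := by
      subst hk
      linarith
    rw [hq, hm]
    exact mem_WPrime_two_mul_add_one_mul (by have := hp.two_le; omega) (pow_pos hp.pos _) x
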